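/- Let λ > 0, y ∈ ℝ³ and Φ ∈ ℂ² with ‖Φ‖² = 3λ/8. Define u = √(3/2)·U_{λ,y} and ψ(x) = U_{λ,y}(x)³·(Φ − c((x − y)/λ)Φ). Then ‖ψ(x)‖² = (3/4)·U_{λ,y}(x)⁴ for all x, and the pair (u, ψ) solves the Euclidean Dirac–Einstein system on all of ℝ³: −Δu(x) = ‖ψ(x)‖²·u(x) and Dψ(x) = u(x)²·ψ(x) for every x ∈ ℝ³. (Explicit form of the ground-state bubbles classified in Theorem 1.2 / Corollary 1.3, with normalizing constants made explicit.) -/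

import Mathlib

noncomputable section

/-- Points of Euclidean `ℝ³`. -/
abbrev R3 := EuclideanSpace ℝ (Fin 3)

/-- Spinors: `ℂ²` with its standard Hermitian inner product and norm. -/
abbrev Spinor := EuclideanSpace ℂ (Fin 2)

/-- The standard bubble `U_{λ,y}(x) = (2λ/(λ² + ‖x − y‖²))^(1/2)`. -/
def bubble (l : ℝ) (y : R3) (x : R3) : ℝ :=
  Real.sqrt (2 * l / (l ^ 2 + ‖x - y‖ ^ 2))

/-- The Euclidean Laplacian `Δu = ∑_{j=1}^3 ∂²u/∂x_j²`. -/
def laplacian (u : R3 → ℝ) (x : R3) : ℝ :=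
  ∑ j : Fin 3,
    fderiv ℝ (fun z => fderiv ℝ u z (EuclideanSpace.single j 1)) x (EuclideanSpace.single j 1)

/-- Pauli matrix `σ₁`. -/
def pauli1 : Matrix (Fin 2) (Fin 2) ℂ := !![0, 1; 1, 0]

/-- Pauli matrix `σ₂`. -/
def pauli2 : Matrix (Fin 2) (Fin 2) ℂ := !![0, -Complex.I; Complex.I, 0]

/-- Pauli matrix `σ₃`. -/
def pauli3 : Matrix (Fin 2) (Fin 2) ℂ := !![1, 0; 0, -1]

/-- Clifford multiplication by `v ∈ ℝ³`: the matrix `c(v) = −i(v₁σ₁ + v₂σ₂ + v₃σ₃)`. -/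
def cliffordMatrix (v : R3) : Matrix (Fin 2) (Fin 2) ℂ :=
  (-Complex.I) • ((v 0 : ℂ) • pauli1 + (v 1 : ℂ) • pauli2 + (v 2 : ℂ) • pauli3)

/-- The action of `c(v)` on a spinor. -/
def cliffordMul (v : R3) (φ : Spinor) : Spinor :=
  (WithLp.equiv 2 (Fin 2 → ℂ)).symm ((cliffordMatrix v).mulVec (WithLp.equiv 2 (Fin 2 → ℂ) φ))

/-- The flat Dirac operator `(Dψ)(x) = ∑_{j=1}^3 c(e_j) ∂ψ/∂x_j(x)`. -/
def Dirac (ψ : R3 → Spinor) (x : R3) : Spinor :=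
  ∑ j : Fin 3,
    cliffordMul (EuclideanSpace.single j 1) (fderiv ℝ ψ x (EuclideanSpace.single j 1))

/-- The ground-state scalar `u = √(3/2)·U_{λ,y}`. -/
def groundScalar (l : ℝ) (y : R3) (x : R3) : ℝ :=
  Real.sqrt (3 / 2) * bubble l y x

/-- The ground-state spinor `ψ(x) = U_{λ,y}(x)³·(Φ − c((x − y)/λ)Φ)`. -/
def groundSpinor (l : ℝ) (y : R3) (Φ : Spinor) (x : R3) : Spinor :=
  (bubble l y x ^ 3 : ℝ) • (Φ - cliffordMul (l⁻¹ • (x - y)) Φ)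

/-!
Everything is a function of `s = ‖x - y‖²`, and the bubble profile `P(s) = √(2λ/(λ² + s))`
satisfies `P' = -P / (2(λ² + s))`, `P'' = 3P / (4(λ² + s)²)` and `P²(λ² + s) = 2λ`.
In `ℝ³` the Laplacian of `g(‖x - y‖²)` is `6g' + 4sg''`, which for `g = P` gives the Yamabe
equation `-ΔU = (3/4)U⁵` for the bubble `U = P(‖x - y‖²)`.
On the spinor side, `c(v)² = -‖v‖²` and the skew-adjointness of `c(v)` give
`‖Φ - c(v)Φ‖² = (1 + ‖v‖²)‖Φ‖²`, while the Leibniz rule `D(fψ) = c(∇f)ψ + f Dψ` and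
`∑ⱼ c(eⱼ)² = -3` turn `Dψ = u²ψ` into two scalar identities in `P`, for the coefficients of
`Φ` and of `c(x - y)Φ`.
-/

open scoped InnerProductSpace

lemma cliffordMul_apply_zero (v : R3) (φ : Spinor) :
    cliffordMul v φ 0 = -Complex.I * v 2 * φ 0 + (-Complex.I * v 0 - v 1) * φ 1 := by
  simp [cliffordMul, cliffordMatrix, pauli1, pauli2, pauli3, dotProduct, Fin.sum_univ_two]
  linear_combination ((v 1 : ℂ) * φ 1) * Complex.I_sq

lemma cliffordMul_apply_one (v : R3) (φ : Spinor) :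
    cliffordMul v φ 1 = (-Complex.I * v 0 + v 1) * φ 0 + Complex.I * v 2 * φ 1 := by
  simp [cliffordMul, cliffordMatrix, pauli1, pauli2, pauli3, dotProduct, Fin.sum_univ_two]
  linear_combination (-(v 1 : ℂ) * φ 0) * Complex.I_sq

lemma spinor_ext {φ χ : Spinor} (h₀ : φ 0 = χ 0) (h₁ : φ 1 = χ 1) : φ = χ := by
  ext i
  fin_cases i <;> assumption

lemma cliffordMul_add (v : R3) (φ χ : Spinor) :
    cliffordMul v (φ + χ) = cliffordMul v φ + cliffordMul v χ := by
  apply spinor_ext <;> simp [cliffordMul_apply_zero, cliffordMul_apply_one] <;> ring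

lemma cliffordMul_sub (v : R3) (φ χ : Spinor) :
    cliffordMul v (φ - χ) = cliffordMul v φ - cliffordMul v χ := by
  apply spinor_ext <;> simp [cliffordMul_apply_zero, cliffordMul_apply_one] <;> ring

lemma cliffordMul_smul (v : R3) (a : ℝ) (φ : Spinor) :
    cliffordMul v (a • φ) = a • cliffordMul v φ := by
  apply spinor_ext <;> simp [cliffordMul_apply_zero, cliffordMul_apply_one, Complex.real_smul] <;>
    ring

lemma add_cliffordMul (v w : R3) (φ : Spinor) :
    cliffordMul (v + w) φ = cliffordMul v φ + cliffordMul w φ := by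
  apply spinor_ext <;> simp [cliffordMul_apply_zero, cliffordMul_apply_one] <;> ring

lemma smul_cliffordMul (a : ℝ) (v : R3) (φ : Spinor) :
    cliffordMul (a • v) φ = a • cliffordMul v φ := by
  apply spinor_ext <;> simp [cliffordMul_apply_zero, cliffordMul_apply_one, Complex.real_smul] <;>
    ring

def cliffordCLM (φ : Spinor) : R3 →L[ℝ] Spinor :=
  LinearMap.toContinuousLinearMap
    { toFun := fun v => cliffordMul v φ
      map_add' := fun v w => add_cliffordMul v w φ
      map_smul' := fun a v => smul_cliffordMul a v φ }

@[simp] lemma cliffordCLM_apply (φ : Spinor) (v : R3) : cliffordCLM φ v = cliffordMul v φ := rfl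

lemma sum_smul_cliffordMul_single (v : R3) (φ : Spinor) :
    ∑ j, v j • cliffordMul (EuclideanSpace.single j 1) φ = cliffordMul v φ := by
  conv_rhs => rw [← (EuclideanSpace.basisFun (Fin 3) ℝ).sum_repr v]
  simp [← cliffordCLM_apply, map_sum]

lemma cliffordMul_cliffordMul_self (v : R3) (φ : Spinor) :
    cliffordMul v (cliffordMul v φ) = (-‖v‖ ^ 2) • φ := by
  rw [EuclideanSpace.real_norm_sq_eq, Fin.sum_univ_three]
  apply spinor_ext
  · simp only [cliffordMul_apply_zero, cliffordMul_apply_one, PiLp.smul_apply, Complex.real_smul]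
    push_cast
    linear_combination (((v 0 : ℂ) ^ 2 + (v 2 : ℂ) ^ 2) * φ 0) * Complex.I_sq
  · simp only [cliffordMul_apply_zero, cliffordMul_apply_one, PiLp.smul_apply, Complex.real_smul]
    push_cast
    linear_combination (((v 0 : ℂ) ^ 2 + (v 2 : ℂ) ^ 2) * φ 1) * Complex.I_sq

lemma sum_cliffordMul_single_cliffordMul_single (φ : Spinor) :
    ∑ j, cliffordMul (EuclideanSpace.single j 1) (cliffordMul (EuclideanSpace.single j 1) φ) =
      (-3 : ℝ) • φ := by
  simp [cliffordMul_cliffordMul_self]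
  module

lemma inner_cliffordMul_left (v : R3) (φ χ : Spinor) :
    ⟪cliffordMul v φ, χ⟫_ℂ = -⟪φ, cliffordMul v χ⟫_ℂ := by
  simp [PiLp.inner_apply, Fin.sum_univ_two, cliffordMul_apply_zero, cliffordMul_apply_one]
  ring

lemma re_inner_cliffordMul_self (v : R3) (φ : Spinor) :
    (⟪φ, cliffordMul v φ⟫_ℂ).re = 0 := by
  have h := congrArg Complex.re (inner_cliffordMul_left v φ φ)
  rw [← inner_conj_symm, Complex.conj_re, Complex.neg_re] at h
  linarith

lemma norm_cliffordMul_sq (v : R3) (φ : Spinor) :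
    ‖cliffordMul v φ‖ ^ 2 = ‖v‖ ^ 2 * ‖φ‖ ^ 2 := by
  rw [← inner_self_eq_norm_sq (𝕜 := ℂ), ← inner_self_eq_norm_sq (𝕜 := ℂ) φ,
    inner_cliffordMul_left, cliffordMul_cliffordMul_self, neg_smul, inner_neg_right, neg_neg,
    inner_smul_right_eq_smul, RCLike.smul_re]

lemma norm_sub_cliffordMul_sq (v : R3) (φ : Spinor) :
    ‖φ - cliffordMul v φ‖ ^ 2 = (1 + ‖v‖ ^ 2) * ‖φ‖ ^ 2 := by
  rw [@norm_sub_sq ℂ, RCLike.re_to_complex, re_inner_cliffordMul_self, norm_cliffordMul_sq]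
  ring

section Radial

variable {g : ℝ → ℝ}

lemma hasFDerivAt_comp_norm_sub_sq {E : Type*} [NormedAddCommGroup E] [InnerProductSpace ℝ E]
    {y x : E} {g' : ℝ} (hg : HasDerivAt g g' (‖x - y‖ ^ 2)) :
    HasFDerivAt (fun z => g (‖z - y‖ ^ 2)) (innerSL ℝ ((2 * g') • (x - y))) x := by
  refine (hg.comp_hasFDerivAt x ((hasFDerivAt_id x).sub_const y).norm_sq).congr_fderiv ?_
  ext v
  simp
  ring

lemma hasFDerivAt_apply_sub (y x : R3) (j : Fin 3) :
    HasFDerivAt (fun z : R3 => (z - y) j) (EuclideanSpace.proj j : R3 →L[ℝ] ℝ) x :=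
  (EuclideanSpace.proj j : R3 →L[ℝ] ℝ).hasFDerivAt.sub_const (y j)

variable {y x : R3}

lemma fderiv_comp_norm_sub_sq_single {g' : ℝ} (hg : HasDerivAt g g' (‖x - y‖ ^ 2)) (j : Fin 3) :
    fderiv ℝ (fun z => g (‖z - y‖ ^ 2)) x (EuclideanSpace.single j 1) = 2 * g' * (x - y) j := by
  simp [(hasFDerivAt_comp_norm_sub_sq hg).fderiv, EuclideanSpace.inner_single_right]

lemma laplacian_comp_norm_sub_sq {g' : ℝ → ℝ} {g'' : ℝ} (hg : ∀ s ≥ 0, HasDerivAt g (g' s) s)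
    (hg' : HasDerivAt g' g'' (‖x - y‖ ^ 2)) :
    laplacian (fun z => g (‖z - y‖ ^ 2)) x = 6 * g' (‖x - y‖ ^ 2) + 4 * ‖x - y‖ ^ 2 * g'' := by
  have hfirst (z : R3) (j : Fin 3) := fderiv_comp_norm_sub_sq_single (hg _ (sq_nonneg ‖z - y‖)) j
  have hsecond (j : Fin 3) := (((hasFDerivAt_comp_norm_sub_sq hg').const_mul 2).fun_mul
    (hasFDerivAt_apply_sub y x j)).fderiv
  simp only [laplacian, hfirst, hsecond]
  simp [EuclideanSpace.inner_single_right, EuclideanSpace.real_norm_sq_eq, Fin.sum_univ_three]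
  ring

end Radial

section Dirac

variable {x : R3}

lemma dirac_eq_of_hasFDerivAt {ψ : R3 → Spinor} {L : R3 →L[ℝ] Spinor} (h : HasFDerivAt ψ L x) :
    Dirac ψ x = ∑ j, cliffordMul (EuclideanSpace.single j 1) (L (EuclideanSpace.single j 1)) := by
  simp [Dirac, h.fderiv]

lemma dirac_smul {f : R3 → ℝ} {ψ : R3 → Spinor} {v : R3} {L : R3 →L[ℝ] Spinor}
    (hf : HasFDerivAt f (innerSL ℝ v) x) (hψ : HasFDerivAt ψ L x) :
    Dirac (fun z => f z • ψ z) x = cliffordMul v (ψ x) + f x • Dirac ψ x := by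
  rw [dirac_eq_of_hasFDerivAt (hf.fun_smul hψ), dirac_eq_of_hasFDerivAt hψ, Finset.smul_sum,
    ← sum_smul_cliffordMul_single, ← Finset.sum_add_distrib]
  refine Finset.sum_congr rfl fun j _ => ?_
  simp [cliffordMul_add, cliffordMul_smul, EuclideanSpace.inner_single_right, add_comm]

lemma hasFDerivAt_sub_cliffordMul (Φ : Spinor) (a : ℝ) (y : R3) :
    HasFDerivAt (fun z => Φ - cliffordMul (a • (z - y)) Φ) (-(a • cliffordCLM Φ)) x := by
  have h := (cliffordCLM Φ).hasFDerivAt.comp x (((hasFDerivAt_id x).sub_const y).const_smul a)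
  refine (h.const_sub Φ).congr_fderiv ?_
  ext v : 1
  simp

lemma dirac_sub_cliffordMul (Φ : Spinor) (a : ℝ) (y : R3) :
    Dirac (fun z => Φ - cliffordMul (a • (z - y)) Φ) x = (3 * a) • Φ := by
  rw [dirac_eq_of_hasFDerivAt (hasFDerivAt_sub_cliffordMul Φ a y)]
  simp only [neg_apply, smul_apply, cliffordCLM_apply, ← neg_smul, cliffordMul_smul,
    ← Finset.smul_sum, sum_cliffordMul_single_cliffordMul_single, smul_smul]
  congr 1
  ring

end Dirac

section Bubble

def bubbleProfile (l s : ℝ) : ℝ := √(2 * l / (l ^ 2 + s))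

lemma bubble_eq_bubbleProfile (l : ℝ) (y x : R3) :
    bubble l y x = bubbleProfile l (‖x - y‖ ^ 2) := rfl

variable {l s : ℝ}

lemma bubbleProfile_sq_mul (hl : 0 < l) (hs : 0 ≤ s) :
    bubbleProfile l s ^ 2 * (l ^ 2 + s) = 2 * l := by
  rw [bubbleProfile, Real.sq_sqrt (by positivity)]
  field_simp

lemma hasDerivAt_bubbleProfile (hl : 0 < l) (hs : 0 ≤ s) :
    HasDerivAt (bubbleProfile l) (-bubbleProfile l s / (2 * (l ^ 2 + s))) s := by
  have hquot := (hasDerivAt_const s (2 * l)).fun_div ((hasDerivAt_id' s).const_add (l ^ 2))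
    (by positivity)
  have hsqrt := Real.hasDerivAt_sqrt (by positivity : 2 * l / (l ^ 2 + s) ≠ 0)
  refine (hsqrt.comp s hquot).congr_deriv ?_
  have hP₀ : 0 < bubbleProfile l s := Real.sqrt_pos.2 (by positivity)
  have hP := bubbleProfile_sq_mul hl hs
  rw [show √(2 * l / (l ^ 2 + s)) = bubbleProfile l s from rfl]
  field_simp
  linear_combination hP

lemma hasDerivAt_deriv_bubbleProfile (hl : 0 < l) (hs : 0 ≤ s) :
    HasDerivAt (fun t => -bubbleProfile l t / (2 * (l ^ 2 + t)))
      (3 * bubbleProfile l s / (4 * (l ^ 2 + s) ^ 2)) s := by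
  refine ((hasDerivAt_bubbleProfile hl hs).fun_neg.div
    (((hasDerivAt_id' s).const_add (l ^ 2)).const_mul 2) (by positivity)).congr_deriv ?_
  field_simp
  ring

end Bubble

section GroundState

variable {l : ℝ} (y : R3) (x : R3)

lemma norm_groundSpinor_sq (hl : 0 < l) {Φ : Spinor} (hΦ : ‖Φ‖ ^ 2 = 3 * l / 8) :
    ‖groundSpinor l y Φ x‖ ^ 2 = 3 / 4 * bubble l y x ^ 4 := by
  have hU := bubbleProfile_sq_mul hl (sq_nonneg ‖x - y‖)
  rw [← bubble_eq_bubbleProfile] at hU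
  have hU₀ : 0 ≤ bubble l y x := Real.sqrt_nonneg _
  rw [groundSpinor, norm_smul, mul_pow, norm_sub_cliffordMul_sq, hΦ, norm_smul, mul_pow,
    Real.norm_of_nonneg (pow_nonneg hU₀ 3),
    Real.norm_of_nonneg (inv_nonneg.2 hl.le)]
  field_simp
  linear_combination 4 * bubble l y x ^ 4 * hU

lemma neg_laplacian_groundScalar (hl : 0 < l) :
    -laplacian (groundScalar l y) x = 3 / 4 * bubble l y x ^ 4 * groundScalar l y x := by
  have hg (s : ℝ) (hs : 0 ≤ s) := (hasDerivAt_bubbleProfile hl hs).const_mul √(3 / 2)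
  have hg' := (hasDerivAt_deriv_bubbleProfile hl (sq_nonneg ‖x - y‖)).const_mul √(3 / 2)
  have hU := bubbleProfile_sq_mul hl (sq_nonneg ‖x - y‖)
  have hu : groundScalar l y = fun z => √(3 / 2) * bubbleProfile l (‖z - y‖ ^ 2) := rfl
  rw [hu, laplacian_comp_norm_sub_sq hg hg', bubble_eq_bubbleProfile]
  set P := bubbleProfile l (‖x - y‖ ^ 2)
  field_simp
  linear_combination -6 * P * (2 * l + P ^ 2 * (l ^ 2 + ‖x - y‖ ^ 2)) * hU

lemma dirac_groundSpinor (hl : 0 < l) (Φ : Spinor) :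
    Dirac (groundSpinor l y Φ) x = (groundScalar l y x ^ 2 : ℝ) • groundSpinor l y Φ x := by
  have hcube := (hasDerivAt_bubbleProfile hl (sq_nonneg ‖x - y‖)).fun_pow 3
  have hDirac :=
    dirac_smul (hasFDerivAt_comp_norm_sub_sq hcube) (hasFDerivAt_sub_cliffordMul Φ l⁻¹ y)
  rw [dirac_sub_cliffordMul] at hDirac
  refine hDirac.trans ?_
  have hU := bubbleProfile_sq_mul hl (sq_nonneg ‖x - y‖)
  have h32 : √(3 / 2) ^ 2 = 3 / 2 := Real.sq_sqrt (by norm_num)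
  simp only [groundScalar, groundSpinor, bubble_eq_bubbleProfile, smul_cliffordMul,
    cliffordMul_sub, cliffordMul_smul, cliffordMul_cliffordMul_self]
  rw [mul_pow, h32]
  set P := bubbleProfile l (‖x - y‖ ^ 2)
  match_scalars <;> field_simp
  · linear_combination P ^ 3 * hU
  · linear_combination -l * P ^ 3 * hU

end GroundState

/-- Let `λ > 0`, `y ∈ ℝ³` and `Φ ∈ ℂ²` with `‖Φ‖² = 3λ/8`. Then the pair
`u = √(3/2)·U_{λ,y}`, `ψ(x) = U_{λ,y}(x)³·(Φ − c((x − y)/λ)Φ)` satisfies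
`‖ψ‖² = (3/4)·U_{λ,y}⁴` and solves the Euclidean Dirac–Einstein system
`−Δu = ‖ψ‖²·u`, `Dψ = u²·ψ` on all of `ℝ³`. -/
theorem groundstate_solves_diracEinstein (l : ℝ) (hl : 0 < l) (y : R3) (Φ : Spinor)
    (hΦ : ‖Φ‖ ^ 2 = 3 * l / 8) :
    (∀ x : R3, ‖groundSpinor l y Φ x‖ ^ 2 = (3 / 4) * bubble l y x ^ 4) ∧
      (∀ x : R3,
        -laplacian (groundScalar l y) x = ‖groundSpinor l y Φ x‖ ^ 2 * groundScalar l y x) ∧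
      (∀ x : R3,
        Dirac (groundSpinor l y Φ) x = (groundScalar l y x ^ 2 : ℝ) • groundSpinor l y Φ x) := by
  refine ⟨fun x => norm_groundSpinor_sq y x hl hΦ, fun x => ?_,
    fun x => dirac_groundSpinor y x hl Φ⟩
  rw [neg_laplacian_groundScalar y x hl, norm_groundSpinor_sq y x hl hΦ]
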